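/- Let P1, P2, a, b be positive reals, C(x) = (1/2)·log₂(1+x), and for a parameter c ≥ 0 define RsI(c) piecewise as: C(P1 + bcP1P2/(1+(1+c)P1+bP2)) − C(aP1/(1+P2)) if b ≥ 1+(1+c)P1; C(P1+bP2) − C(aP1+P2) if 1 ≤ b < 1+(1+c)P1; C(P1/(1+bP2)) − C(aP1/(1+P2)) if 0 < b < 1. Then for every c > 0: (i) if b ≤ 1+P1 then RsI(c) = RsI(0), and (ii) if b > 1+P1 then RsI(c) > RsI(0). -/

import Mathlib

/-!
Below the threshold `b < 1 + (1 + c) P1` the rate does not depend on `c`. Since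
`C x - C (y / (1 + z)) = C (x + (1 + x) z) - C (y + z)`, the rate for `c = 0` above its own
threshold `1 + P1` equals the middle branch evaluated at `b = 1 + P1`: it agrees with the middle
branch at `b = 1 + P1` and is beaten by it for larger `b`. In the top branch, `c > 0` only adds a
positive term inside the first `C`, which is strictly increasing.
-/

noncomputable def C (x : ℝ) : ℝ := (1 / 2) * Real.logb 2 (1 + x)

/-- The piecewise achievable secrecy rate `RsI` of Theorem 2 of the paper, as a
function of the source-relay gain `c`. -/
noncomputable def RsI (P1 P2 a b c : ℝ) : ℝ :=
  if 1 + (1 + c) * P1 ≤ b then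
    C (P1 + b * c * P1 * P2 / (1 + (1 + c) * P1 + b * P2)) - C (a * P1 / (1 + P2))
  else if 1 ≤ b then
    C (P1 + b * P2) - C (a * P1 + P2)
  else
    C (P1 / (1 + b * P2)) - C (a * P1 / (1 + P2))

lemma C_lt_C {x y : ℝ} (hx : -1 < x) (hxy : x < y) : C x < C y := by
  have := Real.logb_lt_logb one_lt_two (by linarith : 0 < 1 + x) (by linarith : 1 + x < 1 + y)
  unfold C
  linarith

lemma C_add_C {x y : ℝ} (hx : 1 + x ≠ 0) (hy : 1 + y ≠ 0) : C x + C y = C (x + (1 + x) * y) := by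
  unfold C
  rw [← mul_add, ← Real.logb_mul hx hy]
  ring_nf

lemma C_sub_C_div {x y z : ℝ} (hx : 1 + x ≠ 0) (hz : 1 + z ≠ 0) (hyz : 1 + y + z ≠ 0) :
    C x - C (y / (1 + z)) = C (x + (1 + x) * z) - C (y + z) := by
  have hy' : 1 + y / (1 + z) ≠ 0 := by
    rw [show 1 + y / (1 + z) = (1 + y + z) / (1 + z) by field_simp; ring]
    exact div_ne_zero hyz hz
  calc C x - C (y / (1 + z)) = (C x + C z) - (C (y / (1 + z)) + C z) := by ring
    _ = C (x + (1 + x) * z) - C (y + z) := by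
      rw [C_add_C hx hz, C_add_C hy' hz]
      congr 2
      field_simp
      ring

section RsI

variable {P1 P2 a b c : ℝ}

lemma RsI_of_le (h : 1 + (1 + c) * P1 ≤ b) :
    RsI P1 P2 a b c =
      C (P1 + b * c * P1 * P2 / (1 + (1 + c) * P1 + b * P2)) - C (a * P1 / (1 + P2)) :=
  if_pos h

lemma RsI_of_one_le_of_lt (h1 : 1 ≤ b) (h : b < 1 + (1 + c) * P1) :
    RsI P1 P2 a b c = C (P1 + b * P2) - C (a * P1 + P2) := by
  rw [RsI, if_neg h.not_ge, if_pos h1]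

lemma RsI_eq_of_lt {c' : ℝ} (h : b < 1 + (1 + c) * P1) (h' : b < 1 + (1 + c') * P1) :
    RsI P1 P2 a b c = RsI P1 P2 a b c' := by
  rw [RsI, RsI, if_neg h.not_ge, if_neg h'.not_ge]

lemma RsI_zero_of_le (h : 1 + P1 ≤ b) : RsI P1 P2 a b 0 = C P1 - C (a * P1 / (1 + P2)) := by
  rw [RsI_of_le (by linarith)]
  simp

lemma RsI_zero_of_le_eq_middle (hP1 : 0 ≤ P1) (hP2 : 0 ≤ P2) (ha : 0 ≤ a) (h : 1 + P1 ≤ b) :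
    RsI P1 P2 a b 0 = C (P1 + (1 + P1) * P2) - C (a * P1 + P2) := by
  rw [RsI_zero_of_le h, C_sub_C_div (by positivity) (by positivity) (by positivity)]

end RsI

theorem stmt_2_general (P1 P2 a b : ℝ) (hP1 : 0 < P1) (hP2 : 0 < P2)
    (ha : 0 < a) :
    ∀ c : ℝ, 0 < c →
      (b ≤ 1 + P1 → RsI P1 P2 a b c = RsI P1 P2 a b 0) ∧
      (1 + P1 < b → RsI P1 P2 a b 0 < RsI P1 P2 a b c) := by
  intro c hc
  have hthr : 1 + P1 < 1 + (1 + c) * P1 := by nlinarith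
  refine ⟨fun hle => ?_, fun hlt => ?_⟩
  · rcases hle.lt_or_eq with hlt | rfl
    · exact RsI_eq_of_lt (by linarith) (by linarith)
    · rw [RsI_of_one_le_of_lt (by linarith) hthr,
        RsI_zero_of_le_eq_middle hP1.le hP2.le ha.le le_rfl]
  · rcases le_or_gt (1 + (1 + c) * P1) b with hbig | hmid
    · rw [RsI_of_le hbig, RsI_zero_of_le hlt.le]
      have hb : 0 < b := by linarith
      refine sub_lt_sub_right (C_lt_C (by linarith) (lt_add_of_pos_right _ ?_)) _
      positivity
    · rw [RsI_of_one_le_of_lt (by linarith) hmid,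
        RsI_zero_of_le_eq_middle hP1.le hP2.le ha.le hlt.le]
      exact sub_lt_sub_right (C_lt_C (by nlinarith) (by nlinarith)) _

/-- Remark 4 of the paper: the proposed scheme's rate coincides with the
interference-assisted (WT-HI) rate (the same expression with `c = 0`) when
`b ≤ 1 + P₁`, and strictly exceeds it when `b > 1 + P₁`. -/
theorem stmt_2 (P1 P2 a b : ℝ) (hP1 : 0 < P1) (hP2 : 0 < P2)
    (ha : 0 < a) (hb : 0 < b) :
    ∀ c : ℝ, 0 < c →
      (b ≤ 1 + P1 → RsI P1 P2 a b c = RsI P1 P2 a b 0) ∧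
      (1 + P1 < b → RsI P1 P2 a b 0 < RsI P1 P2 a b c) :=
  stmt_2_general P1 P2 a b hP1 hP2 ha
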